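/- Let α > γ > 0 and σ ≥ μ > 0. Then for every real number λ with 0 < λ < √(μσ) there exists a unique β in the interval (σ/γ, +∞) such that −δ₁(β) = λ. -/

import Mathlib

/-!
For `β > σ/γ` both `a_β` and `b_β` are positive, so `-δ₁(β) = λ` may be squared without losing
information, and clearing the denominator `β²αγ - μσ` turns it into a quadratic equation in `β`
with leading coefficient `αγ(μσ - λ²) > 0`. That quadratic is negative at `β = σ/γ`, so exactly one
of its roots lies to the right of `σ/γ`.
-/

/-- The positive constant solution component `a_β`. -/
noncomputable def aβ (μ σ α γ β : ℝ) : ℝ := (β * α - μ) * σ / (β ^ 2 * α * γ - μ * σ)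

/-- The positive constant solution component `b_β`. -/
noncomputable def bβ (μ σ α γ β : ℝ) : ℝ := (β * γ - σ) * μ / (β ^ 2 * α * γ - μ * σ)

/-- The smaller eigenvalue `δ₁(β)` of the linearization matrix. -/
noncomputable def δ₁ (μ σ α γ β : ℝ) : ℝ :=
  (1 / 2) * (μ * aβ μ σ α γ β + σ * bβ μ σ α γ β -
    Real.sqrt (4 * β ^ 2 * α * γ * aβ μ σ α γ β * bβ μ σ α γ β +
      (μ * aβ μ σ α γ β - σ * bβ μ σ α γ β) ^ 2))

/-- `-δ₁(β) = λ` says `√X = μ a_β + σ b_β + 2λ` for the radicand `X` of `δ₁`; this is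
`(β²αγ - μσ) / 4 * (X - (μ a_β + σ b_β + 2λ)²)` with the denominators cleared. -/
noncomputable def δ₁Quadratic (μ σ α γ lam β : ℝ) : ℝ :=
  α * γ * (μ * σ - lam ^ 2) * (β * β) + -(μ * σ * ((σ + lam) * α + (μ + lam) * γ)) * β +
    μ * σ * (μ + lam) * (σ + lam)

section Quadratic

variable {a b c x₀ : ℝ}

theorem eq_of_quadratic_eq_zero_of_lt (ha : 0 < a) (h₀ : a * (x₀ * x₀) + b * x₀ + c < 0)
    {y z : ℝ} (hy₀ : x₀ < y) (hz₀ : x₀ < z) (hy : a * (y * y) + b * y + c = 0)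
    (hz : a * (z * z) + b * z + c = 0) : y = z := by
  by_contra hyz
  have hsum : a * (y + z) + b = 0 := by
    have : (y - z) * (a * (y + z) + b) = 0 := by linear_combination hy - hz
    exact (mul_eq_zero.1 this).resolve_left (sub_ne_zero.2 hyz)
  -- Vieta: the quadratic factors as `a (x - y) (x - z)`, which is positive at `x₀ < y, z`.
  have hfactor : a * (x₀ * x₀) + b * x₀ + c = a * ((x₀ - y) * (x₀ - z)) := by
    linear_combination (x₀ - y) * hsum + hy
  have hpos : 0 < a * ((x₀ - y) * (x₀ - z)) :=
    mul_pos ha (mul_pos_of_neg_of_neg (sub_neg.2 hy₀) (sub_neg.2 hz₀))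
  linarith

theorem existsUnique_quadratic_eq_zero_of_lt (ha : 0 < a)
    (h₀ : a * (x₀ * x₀) + b * x₀ + c < 0) :
    ∃! x, x₀ < x ∧ a * (x * x) + b * x + c = 0 := by
  have hdisc : (2 * a * x₀ + b) ^ 2 < discrim a b c := by
    have : discrim a b c = (2 * a * x₀ + b) ^ 2 - 4 * a * (a * (x₀ * x₀) + b * x₀ + c) := by
      rw [discrim]; ring
    nlinarith [mul_pos ha (neg_pos.2 h₀)]
  set s := √(discrim a b c)
  have hs : discrim a b c = s * s := (Real.mul_self_sqrt ((sq_nonneg _).trans hdisc.le)).symm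
  have hlt : 2 * a * x₀ + b < s := (le_abs_self _).trans_lt <| by
    rw [← Real.sqrt_sq_eq_abs]; exact Real.sqrt_lt_sqrt (sq_nonneg _) hdisc
  have hroot_gt : x₀ < (-b + s) / (2 * a) := by
    rw [lt_div_iff₀ (by positivity)]; linarith
  have hroot := (quadratic_eq_zero_iff ha.ne' hs ((-b + s) / (2 * a))).2 (.inl rfl)
  refine ⟨(-b + s) / (2 * a), ⟨hroot_gt, hroot⟩, fun y ⟨hy₀, hy⟩ => ?_⟩
  exact eq_of_quadratic_eq_zero_of_lt ha h₀ hy₀ hroot_gt hy hroot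

end Quadratic

theorem neg_half_sub_sqrt_eq_iff {s X l : ℝ} (hX : 0 ≤ X) (hl : 0 < s + 2 * l) :
    -(1 / 2 * (s - √X)) = l ↔ X = (s + 2 * l) ^ 2 := by
  constructor
  · intro h
    rw [← Real.sq_sqrt hX]
    congr 1
    linarith
  · rintro rfl
    rw [Real.sqrt_sq hl.le]
    ring

section Delta

variable {μ σ α γ β : ℝ}

theorem aβ_pos (hσ : 0 < σ) (hμ : μ < β * α) (hD : μ * σ < β ^ 2 * α * γ) :
    0 < aβ μ σ α γ β :=
  div_pos (mul_pos (sub_pos.2 hμ) hσ) (sub_pos.2 hD)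

theorem bβ_pos (hμ : 0 < μ) (hσ : σ < β * γ) (hD : μ * σ < β ^ 2 * α * γ) :
    0 < bβ μ σ α γ β :=
  div_pos (mul_pos (sub_pos.2 hσ) hμ) (sub_pos.2 hD)

theorem δ₁_radicand_sub_sq_eq (lam : ℝ) (hD : β ^ 2 * α * γ - μ * σ ≠ 0) :
    4 * β ^ 2 * α * γ * aβ μ σ α γ β * bβ μ σ α γ β +
        (μ * aβ μ σ α γ β - σ * bβ μ σ α γ β) ^ 2 -
        (μ * aβ μ σ α γ β + σ * bβ μ σ α γ β + 2 * lam) ^ 2 =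
      4 / (β ^ 2 * α * γ - μ * σ) * δ₁Quadratic μ σ α γ lam β := by
  unfold aβ bβ δ₁Quadratic
  field_simp
  ring

theorem neg_δ₁_eq_iff_δ₁Quadratic_eq_zero {lam : ℝ} (hγα : γ ≤ α) (hγ : 0 < γ) (hμσ : μ ≤ σ)
    (hμ : 0 < μ) (hlam : 0 ≤ lam) (hβ : σ / γ < β) :
    -δ₁ μ σ α γ β = lam ↔ δ₁Quadratic μ σ α γ lam β = 0 := by
  have hσ : 0 < σ := hμ.trans_le hμσ
  have hα : 0 < α := hγ.trans_le hγα
  have hβ₀ : 0 < β := (div_pos hσ hγ).trans hβ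
  have hβγ : σ < β * γ := (div_lt_iff₀ hγ).1 hβ
  have hβα : μ < β * α := by nlinarith
  have hD : μ * σ < β ^ 2 * α * γ := by nlinarith [mul_lt_mul'' hβα hβγ hμ.le hσ.le]
  have ha := aβ_pos hσ hβα hD
  have hb := bβ_pos hμ hβγ hD
  unfold δ₁
  rw [neg_half_sub_sqrt_eq_iff (by positivity) (by positivity), ← sub_eq_zero,
    δ₁_radicand_sub_sq_eq lam (sub_pos.2 hD).ne',
    mul_eq_zero_iff_left (div_pos four_pos (sub_pos.2 hD)).ne']

theorem δ₁Quadratic_at_div_neg {lam : ℝ} (hγα : γ < α) (hγ : 0 < γ) (hμσ : μ ≤ σ) (hμ : 0 < μ)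
    (hlam : 0 < lam) : δ₁Quadratic μ σ α γ lam (σ / γ) < 0 := by
  have hσ : 0 < σ := hμ.trans_le hμσ
  have hval : δ₁Quadratic μ σ α γ lam (σ / γ) = -(lam * σ * (μ + lam) * (σ * α - μ * γ)) / γ := by
    unfold δ₁Quadratic
    field_simp
    ring
  have hgap : 0 < σ * α - μ * γ := by nlinarith
  rw [hval]
  exact div_neg_of_neg_of_pos (neg_neg_of_pos (by positivity)) hγ

end Delta

/-- For α > γ > 0 and σ ≥ μ > 0, and every 0 < λ < √(μσ), there is a unique
β ∈ (σ/γ, ∞) with −δ₁(β) = λ. -/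
theorem neg_delta1_existsUnique
    (μ σ α γ : ℝ) (hαγ : γ < α) (hγ : 0 < γ) (hμσ : μ ≤ σ) (hμ : 0 < μ)
    (lam : ℝ) (hlam0 : 0 < lam) (hlam1 : lam < Real.sqrt (μ * σ)) :
    ∃! β : ℝ, β ∈ Set.Ioi (σ / γ) ∧ -δ₁ μ σ α γ β = lam := by
  have hlam_sq : lam ^ 2 < μ * σ := (Real.lt_sqrt hlam0.le).1 hlam1
  have hlead : 0 < α * γ * (μ * σ - lam ^ 2) :=
    mul_pos (mul_pos (hγ.trans hαγ) hγ) (sub_pos.2 hlam_sq)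
  refine (existsUnique_congr fun β => and_congr_right fun hβ =>
    neg_δ₁_eq_iff_δ₁Quadratic_eq_zero hαγ.le hγ hμσ hμ hlam0.le hβ).2 ?_
  exact existsUnique_quadratic_eq_zero_of_lt hlead (δ₁Quadratic_at_div_neg hαγ hγ hμσ hμ hlam0)
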